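/- Let A(λ) = I_n·λ^r + A_1·λ^{r−1} + ... + A_r and B(λ) = I_n·λ^r + B_1·λ^{r−1} + ... + B_r be monic n×n matrix polynomials of degree r over ℂ that are equivalent, with common Smith normal form S(λ) = diag(s_1(λ), ..., s_{n−1}(λ), s_n(λ)). Let d(λ) = s_1(λ)···s_{n−1}(λ) and let C(λ) be the matrix with B*(λ) = d(λ)·C(λ), where B*(λ) is the adjugate of B(λ). Then the families {A_1, ..., A_r} and {B_1, ..., B_r} are simultaneously similar over ℂ (i.e. there exists T ∈ GL(n, ℂ) with A_i = T·B_i·T^{−1} for all i = 1, ..., r) if and only if there exists a nonsingular constant matrix V ∈ M_{n×n}(ℂ) such that s_n(λ) divides every entry of C(λ)·V·A(λ); moreover, for any such nonsingular V one has A_i = V^{−1}·B_i·V for all i = 1, ..., r. -/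

import Mathlib

/-!
Write `adj B = d • C` and `det B = d * (sₙ * u)` with `u` a unit (the Smith form of `B`). Cancelling
`d` in `adj B * B = det B • 1` gives `C * B = (sₙ * u) • 1`, so `sₙ` divides every entry of `C * M`
exactly when `M = B * W` for a polynomial matrix `W`. For `M = V * A(λ)`, both `A` and `B` being
monic of degree `r`, comparing degrees and leading coefficients in `B * W = V * A` forces `W = V`;
the remaining coefficients of `B * V = V * A` say `Bᵢ * V = V * Aᵢ`.
-/

open Polynomial

namespace Polynomial

variable {S : Type*} [Semiring S]

noncomputable def monicOfCoeffs {r : ℕ} (F : Fin r → S) : S[X] :=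
  X ^ r + ∑ i : Fin r, monomial (r - 1 - i) (F i)

theorem isMonicOfDegree_monicOfCoeffs [Nontrivial S] {r : ℕ} (F : Fin r → S) :
    IsMonicOfDegree (monicOfCoeffs F) r := by
  rcases Nat.eq_zero_or_pos r with rfl | hr
  · simp [monicOfCoeffs]
  refine (isMonicOfDegree_X_pow S r).add_right ?_
  refine (natDegree_sum_le_of_forall_le _ _ fun i _ => (natDegree_monomial_le _).trans ?_).trans_lt
    (Nat.sub_lt hr one_pos)
  omega

theorem coeff_monicOfCoeffs_rev {r : ℕ} (F : Fin r → S) (i : Fin r) :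
    (monicOfCoeffs F).coeff (r - 1 - i) = F i := by
  have hi := i.isLt
  rw [monicOfCoeffs, coeff_add, coeff_X_pow, if_neg (by omega), zero_add, finsetSum_coeff,
    Finset.sum_eq_single i (fun j _ hji => coeff_monomial_of_ne _ ?_) (by simp), coeff_monomial,
    if_pos rfl]
  have hj := j.isLt
  omega

theorem C_mul_monicOfCoeffs_eq_iff {r : ℕ} (F G : Fin r → S) (v : S) :
    C v * monicOfCoeffs F = monicOfCoeffs G * C v ↔ ∀ i, v * F i = G i * v := by
  refine ⟨fun h i => ?_, fun h => ?_⟩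
  · simpa only [coeff_C_mul, coeff_mul_C, coeff_monicOfCoeffs_rev] using
      congrArg (coeff · (r - 1 - i)) h
  · simp only [monicOfCoeffs, mul_add, add_mul, Finset.mul_sum, Finset.sum_mul, C_mul_monomial,
      monomial_mul_C, h, X_pow_mul]

/-- Comparing degrees and leading coefficients in `b * w = C v * a` forces `w = C v`. -/
theorem eq_C_of_mul_eq_C_mul {r : ℕ} {a b w : S[X]} {v : S} (ha : IsMonicOfDegree a r)
    (hb : IsMonicOfDegree b r) (h : b * w = C v * a) : w = C v := by
  have hw : w.natDegree = 0 := by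
    rcases eq_or_ne w 0 with rfl | hw
    · rfl
    have hbw := hb.monic.natDegree_mul' hw
    rw [h, hb.natDegree_eq] at hbw
    have := (natDegree_C_mul_le v a).trans_eq ha.natDegree_eq
    omega
  rw [eq_C_of_natDegree_eq_zero hw] at h ⊢
  have hcoeff := congrArg (coeff · r) h
  simp only [coeff_mul_C, coeff_C_mul] at hcoeff
  rw [← hb.natDegree_eq, hb.monic.coeff_natDegree, one_mul, hb.natDegree_eq,
    ← ha.natDegree_eq, ha.monic.coeff_natDegree, mul_one] at hcoeff
  rw [hcoeff]

end Polynomial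

namespace Matrix

variable {ι R : Type*} [Fintype ι] [DecidableEq ι]

section CommSemiring

variable [CommSemiring R]

noncomputable def monicMatrixPoly {r : ℕ} (F : Fin r → Matrix ι ι R) : Matrix ι ι R[X] :=
  (X ^ r : R[X]) • (1 : Matrix ι ι R[X]) + ∑ i : Fin r, (X ^ (r - 1 - (i : ℕ)) : R[X]) • (F i).map C

theorem matPolyEquiv_monicMatrixPoly {r : ℕ} (F : Fin r → Matrix ι ι R) :
    matPolyEquiv (monicMatrixPoly F) = monicOfCoeffs F := by
  simp [monicMatrixPoly, monicOfCoeffs, C_mul_X_pow_eq_monomial]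

theorem map_C_mul_monicMatrixPoly_eq_iff {r : ℕ} (F G : Fin r → Matrix ι ι R)
    (V : Matrix ι ι R) :
    V.map C * monicMatrixPoly F = monicMatrixPoly G * V.map C ↔ ∀ i, V * F i = G i * V := by
  rw [← matPolyEquiv.injective.eq_iff, map_mul, map_mul, matPolyEquiv_map_C,
    matPolyEquiv_monicMatrixPoly, matPolyEquiv_monicMatrixPoly, C_mul_monicOfCoeffs_eq_iff]

theorem eq_map_C_of_monicMatrixPoly_mul_eq [Nonempty ι] [Nontrivial R] {r : ℕ}
    {F G : Fin r → Matrix ι ι R} {V : Matrix ι ι R} {W : Matrix ι ι R[X]}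
    (h : monicMatrixPoly G * W = V.map C * monicMatrixPoly F) : W = V.map C := by
  apply matPolyEquiv.injective
  rw [matPolyEquiv_map_C]
  apply eq_C_of_mul_eq_C_mul (isMonicOfDegree_monicOfCoeffs F) (isMonicOfDegree_monicOfCoeffs G)
  simpa only [map_mul, matPolyEquiv_map_C, matPolyEquiv_monicMatrixPoly] using
    congrArg matPolyEquiv h

end CommSemiring

section CommRing

variable [CommRing R]

theorem associated_det_prod_of_mul_mul_eq_diagonal {U B W : Matrix ι ι R} {s : ι → R}
    (hU : IsUnit U.det) (hW : IsUnit W.det) (h : U * B * W = diagonal s) :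
    Associated B.det (∏ i, s i) := by
  refine ⟨(hU.mul hW).unit, ?_⟩
  rw [IsUnit.unit_spec, ← det_diagonal, ← h, det_mul, det_mul]
  ring

theorem mul_eq_mul_iff_eq_inv_mul_mul {V X Y : Matrix ι ι R} (hV : IsUnit V.det) :
    V * X = Y * V ↔ X = V⁻¹ * Y * V := by
  have := V.invertibleOfIsUnitDet hV
  rw [Matrix.mul_assoc, eq_comm (a := X), inv_mul_eq_iff_eq_mul_of_invertible, eq_comm]

variable [IsDomain R]

/-- The point is `Cm * B = c • 1`, obtained by cancelling `d` in `adj B * B = det B • 1`. -/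
theorem forall_dvd_mul_apply_iff_exists_mul_eq {B Cm M : Matrix ι ι R} {d c : R} (hd : d ≠ 0)
    (hc : c ≠ 0) (hdet : B.det = d * c) (hadj : B.adjugate = d • Cm) :
    (∀ p q, c ∣ (Cm * M) p q) ↔ ∃ W, B * W = M := by
  have hCmB : Cm * B = c • 1 := by
    apply smul_right_injective _ hd
    dsimp only
    rw [← smul_mul, ← hadj, adjugate_mul, hdet, mul_smul]
  constructor
  · intro h
    choose N hN using h
    refine ⟨of N, smul_right_injective _ (mul_ne_zero hd hc) ?_⟩
    have hCmM : Cm * M = c • of N := ext hN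
    dsimp only
    rw [mul_smul, ← mul_smul_comm, ← hCmM, ← mul_smul_comm, ← smul_mul, ← hadj, ← Matrix.mul_assoc,
      mul_adjugate, hdet, smul_mul, Matrix.one_mul]
  · rintro ⟨W, rfl⟩ p q
    rw [← Matrix.mul_assoc, hCmB, smul_mul, Matrix.one_mul, smul_apply, smul_eq_mul]
    exact dvd_mul_right c _

theorem forall_dvd_mul_map_C_mul_monicMatrixPoly_iff [Nonempty ι] {r : ℕ}
    {F G : Fin r → Matrix ι ι R} {Cm : Matrix ι ι R[X]} {d c : R[X]} (hd : d ≠ 0) (hc : c ≠ 0)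
    (hdet : (monicMatrixPoly G).det = d * c) (hadj : (monicMatrixPoly G).adjugate = d • Cm)
    (V : Matrix ι ι R) :
    (∀ p q, c ∣ (Cm * V.map C * monicMatrixPoly F) p q) ↔ ∀ i, V * F i = G i * V := by
  rw [← map_C_mul_monicMatrixPoly_eq_iff, Matrix.mul_assoc,
    forall_dvd_mul_apply_iff_exists_mul_eq hd hc hdet hadj]
  exact ⟨fun ⟨W, hW⟩ => eq_map_C_of_monicMatrixPoly_mul_eq hW ▸ hW.symm, fun h => ⟨_, h.symm⟩⟩

end CommRing

end Matrix

theorem Fin.prod_univ_eq_prod_filter_lt_mul {M : Type*} [CommMonoid M] {n : ℕ} (hn : 1 ≤ n)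
    (s : Fin n → M) :
    ∏ i, s i = (∏ i ∈ Finset.univ.filter (fun i : Fin n => (i : ℕ) < n - 1), s i) *
      s ⟨n - 1, Nat.sub_one_lt_of_lt hn⟩ := by
  rw [← Finset.prod_filter_mul_prod_filter_not Finset.univ (fun i : Fin n => (i : ℕ) < n - 1)]
  congr 1
  convert Finset.prod_singleton s (⟨n - 1, by omega⟩ : Fin n)
  ext i
  simp only [Finset.mem_filter, Finset.mem_univ, true_and, Finset.mem_singleton, Fin.ext_iff]
  omega

/-- **Corollary 3.2.** Let `A(λ) = Iₙλ^r + A₁λ^{r-1} + ⋯ + A_r` and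
`B(λ) = Iₙλ^r + B₁λ^{r-1} + ⋯ + B_r` be monic `n × n` matrix polynomials of degree `r`
over `ℂ` that are equivalent, with common Smith normal form `diag(s₁, …, sₙ)`.
Let `d = s₁ ⋯ s_{n-1}` and write `B*(λ) = d(λ)·C(λ)`. Then the families
`{A₁, …, A_r}` and `{B₁, …, B_r}` are simultaneously similar over `ℂ` iff there exists a
nonsingular constant matrix `V` such that `sₙ(λ)` divides every entry of `C(λ)·V·A(λ)`;
moreover, for any such nonsingular `V` one has `Aᵢ = V⁻¹·Bᵢ·V` for all `i`. -/
theorem families_similar_iff_exists_nonsingular_solution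
    {n r : ℕ} (hn : 1 ≤ n)
    (Acoef Bcoef : Fin r → Matrix (Fin n) (Fin n) ℂ)
    (A B : Matrix (Fin n) (Fin n) ℂ[X])
    (hAdef : A = (X ^ r : ℂ[X]) • (1 : Matrix (Fin n) (Fin n) ℂ[X]) +
      ∑ i : Fin r, (X ^ (r - 1 - (i : ℕ)) : ℂ[X]) • (Acoef i).map Polynomial.C)
    (hBdef : B = (X ^ r : ℂ[X]) • (1 : Matrix (Fin n) (Fin n) ℂ[X]) +
      ∑ i : Fin r, (X ^ (r - 1 - (i : ℕ)) : ℂ[X]) • (Bcoef i).map Polynomial.C)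
    (s : Fin n → ℂ[X]) (hmonic : ∀ i, (s i).Monic)
    (hsmithB : ∃ U V : Matrix (Fin n) (Fin n) ℂ[X],
      IsUnit U.det ∧ IsUnit V.det ∧ U * B * V = Matrix.diagonal s)
    (d : ℂ[X]) (hd : d = ∏ i ∈ Finset.univ.filter (fun i : Fin n => (i : ℕ) < n - 1), s i)
    (Cm : Matrix (Fin n) (Fin n) ℂ[X]) (hCm : ∀ p q, B.adjugate p q = d * Cm p q) :
    ((∃ T : Matrix (Fin n) (Fin n) ℂ, IsUnit T.det ∧
        ∀ i : Fin r, Acoef i = T * Bcoef i * T⁻¹) ↔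
      (∃ V : Matrix (Fin n) (Fin n) ℂ, V.det ≠ 0 ∧
        ∀ p q : Fin n, s ⟨n - 1, by omega⟩ ∣ (Cm * V.map Polynomial.C * A) p q)) ∧
    (∀ V : Matrix (Fin n) (Fin n) ℂ, V.det ≠ 0 →
      (∀ p q : Fin n, s ⟨n - 1, by omega⟩ ∣ (Cm * V.map Polynomial.C * A) p q) →
      ∀ i : Fin r, Acoef i = V⁻¹ * Bcoef i * V) := by
  have : Nonempty (Fin n) := ⟨⟨0, hn⟩⟩
  obtain ⟨U, W, hU, hW, hUBW⟩ := hsmithB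
  obtain ⟨u, hu⟩ := (Matrix.associated_det_prod_of_mul_mul_eq_diagonal hU hW hUBW).symm
  rw [Fin.prod_univ_eq_prod_filter_lt_mul hn, ← hd, mul_assoc] at hu
  have hd0 : d ≠ 0 := hd ▸ (monic_prod_of_monic _ _ fun i _ => hmonic i).ne_zero
  have hdiv_iff (V : Matrix (Fin n) (Fin n) ℂ) :
      (∀ p q, s ⟨n - 1, by omega⟩ ∣ (Cm * V.map C * A) p q) ↔
        ∀ i, V * Acoef i = Bcoef i * V := by
    simp only [← Units.mul_right_dvd (a := s ⟨n - 1, by omega⟩) (u := u)]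
    subst hAdef hBdef
    exact Matrix.forall_dvd_mul_map_C_mul_monicMatrixPoly_iff hd0
      (mul_ne_zero (hmonic _).ne_zero u.ne_zero) hu.symm (Matrix.ext hCm) V
  have hconj (V : Matrix (Fin n) (Fin n) ℂ) (hV : V.det ≠ 0) :
      (∀ i, V * Acoef i = Bcoef i * V) ↔ ∀ i, Acoef i = V⁻¹ * Bcoef i * V :=
    forall_congr' fun i => Matrix.mul_eq_mul_iff_eq_inv_mul_mul hV.isUnit
  have hsolution (V : Matrix (Fin n) (Fin n) ℂ) (hV : V.det ≠ 0)
      (hdiv : ∀ p q, s ⟨n - 1, by omega⟩ ∣ (Cm * V.map C * A) p q) :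
      ∀ i, Acoef i = V⁻¹ * Bcoef i * V :=
    (hconj V hV).1 ((hdiv_iff V).1 hdiv)
  refine ⟨⟨fun ⟨T, hT, hTA⟩ => ⟨T⁻¹, (T.isUnit_nonsing_inv_det hT).ne_zero, ?_⟩,
    fun ⟨V, hV, hdiv⟩ => ⟨V⁻¹, V.isUnit_nonsing_inv_det hV.isUnit, ?_⟩⟩, hsolution⟩
  · rwa [hdiv_iff, hconj _ (T.isUnit_nonsing_inv_det hT).ne_zero, T.nonsing_inv_nonsing_inv hT]
  · simpa only [V.nonsing_inv_nonsing_inv hV.isUnit] using hsolution V hV hdiv
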